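/- arXiv:1203.4069 — 2 statements merged into one kernel-verified Lean document; each statement's English description precedes it below -/
import Mathlib

section
/- For all integers k ≥ 2 and p ≥ 1, the counts g(k,p) of lattice points in maximal odd-diameter L¹-balls satisfy the recurrence g(k,p) = g(k,p−1) + g(k−1,p) + g(k−1,p−1). -/
/-!
Splitting off one coordinate `m` of a point of the `k`-dimensional ball of radius `p + 1/2`
leaves a point `w` of the `(k-1)`-dimensional one, and the weight becomes that of `w` plus
`2|m|`. The slice `m = 0` is the `(k-1)`-ball of radius `p + 1/2`, and the slices `m > 0` and
`m < 0` are exchanged by `m ↦ -m`. Shifting `m` down by one maps the half `m > 0` onto the half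
`m ≥ 0` of the `k`-ball of radius `p - 1/2`; two copies of that half make up this smaller ball
together with one extra copy of its slice `m = 0`, the `(k-1)`-ball of radius `p - 1/2`.
-/

/-- `latticeBallOdd k p hk` is the number of lattice points `x ∈ ℤ^k` with
`|2 x₁ - 1| + ∑_{i ≥ 2} 2 |x i| ≤ 2p + 1`, i.e. the number of lattice points in a
maximal L¹-ball of odd diameter `2p+1` (radius `p + 1/2`, centered at the midpoint
`(1/2, 0, …, 0)` of a lattice edge). -/
noncomputable def latticeBallOdd (k p : ℕ) (hk : 0 < k) : ℕ :=
  Set.ncard {x : Fin k → ℤ |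
    |2 * x ⟨0, hk⟩ - 1| + ∑ i ∈ Finset.univ.erase (⟨0, hk⟩ : Fin k), 2 * |x i| ≤ 2 * (p : ℤ) + 1}

section

variable {γ : Type*} (F : γ → ℤ) (c : ℤ)

theorem encard_setOf_add_mul_abs_le (r : ℤ) :
    {z : γ × ℤ | F z.1 + c * |z.2| ≤ r}.encard =
      {b | F b ≤ r}.encard + 2 * {z : γ × ℤ | 0 < z.2 ∧ F z.1 + c * z.2 ≤ r}.encard := by
  set P := {z : γ × ℤ | 0 < z.2 ∧ F z.1 + c * z.2 ≤ r}
  have hsplit : {z : γ × ℤ | F z.1 + c * |z.2| ≤ r} =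
      {b | F b ≤ r} ×ˢ {0} ∪ (P ∪ Prod.map id Neg.neg ⁻¹' P) := by
    ext ⟨b, m⟩
    rcases lt_trichotomy m 0 with hm | rfl | hm
    · simp [P, abs_of_neg hm, hm, hm.ne, hm.not_gt]
    · simp [P]
    · simp [P, abs_of_pos hm, hm, hm.ne', hm.le]
  have hdisj : Disjoint ({b | F b ≤ r} ×ˢ {(0 : ℤ)}) (P ∪ Prod.map id Neg.neg ⁻¹' P) := by
    rw [Set.disjoint_left]
    rintro ⟨b, m⟩ ⟨-, rfl⟩ h
    simp [P] at h
  have hdisj' : Disjoint P (Prod.map id Neg.neg ⁻¹' P) := by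
    rw [Set.disjoint_left]
    rintro ⟨b, m⟩ ⟨hm, -⟩ ⟨hm', -⟩
    simp only [Prod.map_snd] at hm'
    omega
  rw [hsplit, Set.encard_union_eq hdisj, Set.encard_union_eq hdisj',
    Set.encard_preimage_of_bijective (Function.bijective_id.prodMap neg_bijective), Set.encard_prod,
    Set.encard_singleton, mul_one, two_mul]

theorem encard_setOf_pos_add_mul_le_add (r : ℤ) :
    {z : γ × ℤ | 0 < z.2 ∧ F z.1 + c * z.2 ≤ r + c}.encard =
      {b | F b ≤ r}.encard + {z : γ × ℤ | 0 < z.2 ∧ F z.1 + c * z.2 ≤ r}.encard := by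
  set P := {z : γ × ℤ | 0 < z.2 ∧ F z.1 + c * z.2 ≤ r}
  have hshift : {z : γ × ℤ | 0 < z.2 ∧ F z.1 + c * z.2 ≤ r + c} =
      Prod.map id (· - 1) ⁻¹' ({b | F b ≤ r} ×ˢ {0} ∪ P) := by
    ext ⟨b, m⟩
    simp only [Set.mem_ofPred_eq, Set.mem_preimage, Prod.map, id, Set.mem_union, Set.mem_prod,
      Set.mem_singleton_iff, P, mul_sub, mul_one]
    constructor
    · rintro ⟨hm, h⟩
      obtain rfl | hm' := eq_or_lt_of_le (show 1 ≤ m by omega)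
      · exact Or.inl ⟨by linarith, by norm_num⟩
      · exact Or.inr ⟨by omega, by linarith⟩
    · rintro (⟨h, hm⟩ | ⟨hm, h⟩)
      · obtain rfl : m = 1 := by omega
        exact ⟨one_pos, by linarith⟩
      · exact ⟨by omega, by linarith⟩
  have hdisj : Disjoint ({b | F b ≤ r} ×ˢ {(0 : ℤ)}) P := by
    rw [Set.disjoint_left]
    rintro ⟨b, m⟩ ⟨-, rfl⟩ h
    simp [P] at h
  rw [hshift, Set.encard_preimage_of_bijective (f := Prod.map id (· - 1))
      (Function.bijective_id.prodMap (Equiv.subRight 1).bijective),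
    Set.encard_union_eq hdisj, Set.encard_prod, Set.encard_singleton, mul_one]

theorem encard_setOf_add_mul_abs_le_add (r : ℤ) :
    {z : γ × ℤ | F z.1 + c * |z.2| ≤ r + c}.encard =
      {z : γ × ℤ | F z.1 + c * |z.2| ≤ r}.encard + {b | F b ≤ r + c}.encard +
        {b | F b ≤ r}.encard := by
  rw [encard_setOf_add_mul_abs_le, encard_setOf_pos_add_mul_le_add, encard_setOf_add_mul_abs_le]
  ring

end

def oddBallWeight (n : ℕ) (z : ℤ × (Fin n → ℤ)) : ℤ :=
  |2 * z.1 - 1| + ∑ i, 2 * |z.2 i|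

theorem oddBallWeight_succ (n : ℕ) (z : ℤ × (Fin (n + 1) → ℤ)) :
    oddBallWeight (n + 1) z = oddBallWeight n (z.1, Fin.tail z.2) + 2 * |z.2 0| := by
  simp only [oddBallWeight, Fin.sum_univ_succ, Fin.tail]
  ring

theorem finite_setOf_oddBallWeight_le (n : ℕ) (r : ℤ) :
    {z | oddBallWeight n z ≤ r}.Finite := by
  refine ((Set.finite_Icc (-r) r).prod (Set.Finite.pi' fun _ => Set.finite_Icc (-r) r)).subset ?_
  rintro ⟨a, y⟩ h
  simp only [Set.mem_ofPred_eq, oddBallWeight] at h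
  have hy : ∀ i, 2 * |y i| ≤ ∑ j, 2 * |y j| := fun i =>
    Finset.single_le_sum (f := fun j => 2 * |y j|) (fun j _ => by positivity) (Finset.mem_univ i)
  have hsum : 0 ≤ ∑ j, 2 * |y j| := Finset.sum_nonneg fun j _ => by positivity
  have ha := abs_le.mp (show |2 * a - 1| ≤ r by linarith)
  refine ⟨⟨by omega, by omega⟩, fun i => abs_le.mp ?_⟩
  linarith [hy i, abs_nonneg (y i), abs_nonneg (2 * a - 1)]

theorem latticeBallOdd_succ (n p : ℕ) (h : 0 < n + 1) :
    latticeBallOdd (n + 1) p h = {z | oddBallWeight n z ≤ 2 * p + 1}.ncard := by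
  have hset : {x : Fin (n + 1) → ℤ | |2 * x ⟨0, h⟩ - 1| +
      ∑ i ∈ Finset.univ.erase (⟨0, h⟩ : Fin (n + 1)), 2 * |x i| ≤ 2 * (p : ℤ) + 1} =
      (Fin.consEquiv fun _ => ℤ).symm ⁻¹' {z | oddBallWeight n z ≤ 2 * p + 1} := by
    ext x
    simp [oddBallWeight, Fin.tail, Fin.consEquiv, Fin.sum_univ_succ]
  rw [latticeBallOdd, hset, Set.ncard_preimage_of_injective_subset_range (Equiv.injective _)
    (by simp)]

theorem encard_setOf_oddBallWeight_succ_le (n : ℕ) (r : ℤ) :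
    {z | oddBallWeight (n + 1) z ≤ r}.encard =
      {w : (ℤ × (Fin n → ℤ)) × ℤ | oddBallWeight n w.1 + 2 * |w.2| ≤ r}.encard := by
  let e : ℤ × (Fin (n + 1) → ℤ) → (ℤ × (Fin n → ℤ)) × ℤ := fun z => ((z.1, Fin.tail z.2), z.2 0)
  have he : e.Bijective := Function.bijective_iff_has_inverse.mpr
    ⟨fun w => (w.1.1, Fin.cons w.2 w.1.2), fun z => by simp [e], fun w => by simp [e]⟩
  rw [← Set.encard_preimage_of_bijective he]
  simp only [Set.preimage_ofPred_eq, oddBallWeight_succ, e]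

theorem ncard_setOf_oddBallWeight_succ_le_add_two (n : ℕ) (r : ℤ) :
    {z | oddBallWeight (n + 1) z ≤ r + 2}.ncard =
      {z | oddBallWeight (n + 1) z ≤ r}.ncard + {z | oddBallWeight n z ≤ r + 2}.ncard +
        {z | oddBallWeight n z ≤ r}.ncard := by
  apply Nat.cast_injective (R := ℕ∞)
  push_cast
  simp only [(finite_setOf_oddBallWeight_le _ _).cast_ncard_eq,
    encard_setOf_oddBallWeight_succ_le]
  exact encard_setOf_add_mul_abs_le_add (oddBallWeight n) 2 r

/-- For all `k ≥ 2` and `p ≥ 1`, the counts of lattice points in maximal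
odd-diameter L¹-balls satisfy `g(k,p) = g(k,p−1) + g(k−1,p) + g(k−1,p−1)`. -/
theorem latticeBallOdd_recurrence (k p : ℕ) (hk : 2 ≤ k) (hp : 1 ≤ p) :
    latticeBallOdd k p (by omega) =
      latticeBallOdd k (p - 1) (by omega) + latticeBallOdd (k - 1) p (by omega) +
        latticeBallOdd (k - 1) (p - 1) (by omega) := by
  obtain ⟨n, rfl⟩ : ∃ n, k = n + 1 + 1 := ⟨k - 2, by omega⟩
  obtain ⟨q, rfl⟩ : ∃ q, p = q + 1 := ⟨p - 1, by omega⟩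
  simp only [Nat.add_sub_cancel, latticeBallOdd_succ]
  rw [show 2 * ((q + 1 : ℕ) : ℤ) + 1 = 2 * q + 1 + 2 by push_cast; ring]
  exact ncard_setOf_oddBallWeight_succ_le_add_two n (2 * q + 1)
end

section
/- For every integer k ≥ 1, the following identity of formal power series over ℤ holds: (1 − X)^{k+1} · Σ_{p≥0} g(k,p) X^p = 2·(1 + X)^{k−1}, where g(k,p) is the number of lattice points in a maximal L¹-ball of odd diameter 2p+1 in ℤ^k. Equivalently, the generating function Σ_{p≥0} g(k,p) X^p equals 2(1+X)^{k−1}/(1−X)^{k+1}. -/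
open PowerSeries
open Finset hiding mk

theorem ncard_eq_sum_antidiagonal_of_cons_mem_iff {α : Type*} {m n : ℕ} (w : α → ℕ)
    (F : ℕ → Finset α) (hF : ∀ i a, a ∈ F i ↔ w a = i) (B : ℕ → Finset (Fin m → α))
    (S : Set (Fin (m + 1) → α)) (hS : ∀ a y, Fin.cons a y ∈ S ↔ w a ≤ n ∧ y ∈ B (n - w a)) :
    S.ncard = ∑ ij ∈ antidiagonal n, #(F ij.1) * #(B ij.2) := by
  classical
  set T := (antidiagonal n).sigma fun ij => F ij.1 ×ˢ B ij.2
  have mem_T : ∀ {ij a y}, ⟨ij, a, y⟩ ∈ T ↔ ij.1 + ij.2 = n ∧ w a = ij.1 ∧ y ∈ B ij.2 := by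
    simp only [T, mem_sigma, HasAntidiagonal.mem_antidiagonal, mem_product, hF, implies_true]
  set cons : (_ : ℕ × ℕ) × α × (Fin m → α) → (Fin (m + 1) → α) := fun t => Fin.cons t.2.1 t.2.2
  have hST : S = ↑(T.image cons) := by
    ext x
    rw [← Fin.cons_self_tail x, hS, coe_image]
    constructor
    · rintro ⟨hw, hy⟩
      exact ⟨⟨(w (x 0), n - w (x 0)), x 0, Fin.tail x⟩, mem_T.2 ⟨by omega, rfl, hy⟩, rfl⟩
    · rintro ⟨⟨ij, a, y⟩, hT, hxy⟩
      obtain ⟨rfl, rfl⟩ := Fin.cons_injective2 hxy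
      obtain ⟨hij, hw, hy⟩ := mem_T.1 hT
      refine ⟨by omega, ?_⟩
      rwa [show n - w (x 0) = ij.2 by omega]
  have hinj : Set.InjOn cons T := by
    rintro ⟨ij, a, y⟩ hT ⟨ij', a', y'⟩ hT' h
    obtain ⟨ha, hy⟩ := Fin.cons_injective2 h
    dsimp only at ha hy
    subst ha hy
    obtain ⟨hij, hw, -⟩ := mem_T.1 hT
    obtain ⟨hij', hw', -⟩ := mem_T.1 hT'
    obtain rfl : ij = ij' := Prod.ext (hw.symm.trans hw') (by omega)
    rfl
  rw [hST, Set.ncard_coe_finset, card_image_of_injOn hinj, card_sigma]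
  simp only [card_product]

variable {R : Type*}

theorem mk_ncard_eq_mul_of_cons_mem_iff [Semiring R] {α : Type*} {m : ℕ} (w : α → ℕ)
    (F : ℕ → Finset α) (hF : ∀ i a, a ∈ F i ↔ w a = i) (B : ℕ → Finset (Fin m → α))
    (S : ℕ → Set (Fin (m + 1) → α))
    (hS : ∀ n a y, Fin.cons a y ∈ S n ↔ w a ≤ n ∧ y ∈ B (n - w a)) :
    mk (fun n => ((S n).ncard : R)) = mk (fun i => (#(F i) : R)) * mk (fun j => (#(B j) : R)) := by
  ext n
  rw [coeff_mk, coeff_mul, ncard_eq_sum_antidiagonal_of_cons_mem_iff w F hF B (S n) (hS n)]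
  simp

noncomputable def l1Ball (m n : ℕ) : Finset (Fin m → ℤ) :=
  {y ∈ Fintype.piFinset fun _ => Icc (-(n : ℤ)) n | ∑ i, |y i| ≤ n}

theorem mem_l1Ball {m n : ℕ} {y : Fin m → ℤ} : y ∈ l1Ball m n ↔ ∑ i, |y i| ≤ n := by
  refine ⟨fun h => (mem_filter.1 h).2, fun h => mem_filter.2 ⟨Fintype.mem_piFinset.2 fun i => ?_, h⟩⟩
  have := (single_le_sum (fun j _ => abs_nonneg (y j)) (mem_univ i)).trans h
  exact mem_Icc.2 (abs_le.1 this)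

theorem cons_mem_l1Ball {m n : ℕ} {a : ℤ} {y : Fin m → ℤ} :
    Fin.cons a y ∈ l1Ball (m + 1) n ↔ a.natAbs ≤ n ∧ y ∈ l1Ball m (n - a.natAbs) := by
  have := sum_nonneg fun i (_ : i ∈ univ) => abs_nonneg (y i)
  simp only [mem_l1Ball, Fin.sum_univ_succ, Fin.cons_zero, Fin.cons_succ, Int.abs_eq_natAbs a]
  omega

theorem mem_pair_neg_iff_natAbs_eq {i : ℕ} {a : ℤ} :
    a ∈ ({(i : ℤ), -(i : ℤ)} : Finset ℤ) ↔ a.natAbs = i := by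
  simp only [mem_insert, mem_singleton]
  omega

theorem mk_card_natAbs_fiber [Semiring R] :
    mk (fun i : ℕ => (#({(i : ℤ), -(i : ℤ)} : Finset ℤ) : R)) = (1 + X) * mk 1 := by
  ext (_ | i)
  · simp
  · rw [add_mul, one_mul, map_add, coeff_succ_X_mul, coeff_mk,
      card_pair (show ((i + 1 : ℕ) : ℤ) ≠ -(i + 1 : ℕ) by omega)]
    simp [one_add_one_eq_two]

theorem l1Ball_genFun [CommRing R] (m : ℕ) :
    (1 - X : R⟦X⟧) ^ (m + 1) * mk (fun n => (#(l1Ball m n) : R)) = (1 + X) ^ m := by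
  induction m with
  | zero =>
    have : mk (fun n => (#(l1Ball 0 n) : R)) = mk 1 := by
      ext n
      simp [l1Ball]
    rw [this, pow_one, mul_comm, mk_one_mul_one_sub_eq_one, pow_zero]
  | succ m ih =>
    have hrec := mk_ncard_eq_mul_of_cons_mem_iff (R := R) Int.natAbs _
      (fun _ _ => mem_pair_neg_iff_natAbs_eq) (l1Ball m) (fun n => ↑(l1Ball (m + 1) n))
      (fun n a y => by rw [mem_coe, cons_mem_l1Ball])
    simp only [Set.ncard_coe_finset] at hrec
    rw [hrec, mk_card_natAbs_fiber]
    calc _ = (1 + X) * (mk 1 * (1 - X)) * ((1 - X) ^ (m + 1) * mk (fun n => (#(l1Ball m n) : R))) :=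
          by ring
      _ = _ := by rw [mk_one_mul_one_sub_eq_one, ih]; ring

def oddWeight (a : ℤ) : ℕ := (2 * a - 1).natAbs / 2

theorem mem_pair_iff_oddWeight_eq {i : ℕ} {a : ℤ} :
    a ∈ ({(i : ℤ) + 1, -(i : ℤ)} : Finset ℤ) ↔ oddWeight a = i := by
  simp only [mem_insert, mem_singleton, oddWeight]
  omega

theorem Fin.sum_univ_erase_zero {M : Type*} [AddCommMonoid M] [IsLeftCancelAdd M] {m : ℕ}
    (f : Fin (m + 1) → M) : ∑ i ∈ univ.erase 0, f i = ∑ j : Fin m, f j.succ :=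
  add_left_cancel ((add_sum_erase _ f (mem_univ 0)).trans (Fin.sum_univ_succ f))

theorem cons_mem_latticeBallOdd_set_iff {m p : ℕ} {a : ℤ} {y : Fin m → ℤ} :
    Fin.cons a y ∈ {x : Fin (m + 1) → ℤ | |2 * x ⟨0, m.succ_pos⟩ - 1| +
        ∑ i ∈ univ.erase (⟨0, m.succ_pos⟩ : Fin (m + 1)), 2 * |x i| ≤ 2 * (p : ℤ) + 1} ↔
      oddWeight a ≤ p ∧ y ∈ l1Ball m (p - oddWeight a) := by
  have := sum_nonneg fun i (_ : i ∈ univ) => abs_nonneg (y i)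
  simp only [Set.mem_ofPred_eq, Fin.zero_eta, Fin.sum_univ_erase_zero, Fin.cons_zero,
    Fin.cons_succ, ← mul_sum, mem_l1Ball, Int.abs_eq_natAbs (2 * a - 1), oddWeight]
  omega

theorem latticeBallOdd_succ_genFun [Semiring R] (m : ℕ) :
    mk (fun p => (latticeBallOdd (m + 1) p m.succ_pos : R)) =
      2 * mk 1 * mk (fun j => (#(l1Ball m j) : R)) := by
  have hfiber : mk (fun i : ℕ => (#({(i : ℤ) + 1, -(i : ℤ)} : Finset ℤ) : R)) = 2 * mk 1 := by
    ext i
    rw [coeff_mk, card_pair (by omega), ← map_ofNat C 2, coeff_C_mul, coeff_mk]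
    simp
  rw [← hfiber]
  exact mk_ncard_eq_mul_of_cons_mem_iff oddWeight _ (fun _ _ => mem_pair_iff_oddWeight_eq)
    (l1Ball m) _ fun _ _ _ => cons_mem_latticeBallOdd_set_iff

/-- For every `k ≥ 1`, in `ℤ⟦X⟧` one has
`(1 − X)^{k+1} · ∑_{p≥0} g(k,p) Xᵖ = 2·(1 + X)^{k−1}`, i.e. the generating function of the
lattice-point counts of maximal odd-diameter L¹-balls in `ℤ^k` is `2(1+X)^{k−1}/(1−X)^{k+1}`. -/
theorem latticeBallOdd_genFun (k : ℕ) (hk : 1 ≤ k) :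
    (1 - (PowerSeries.X : PowerSeries ℤ)) ^ (k + 1) *
        PowerSeries.mk (fun p => (latticeBallOdd k p hk : ℤ)) =
      2 * (1 + (PowerSeries.X : PowerSeries ℤ)) ^ (k - 1) := by
  obtain ⟨m, rfl⟩ := Nat.exists_eq_add_of_le' hk
  rw [latticeBallOdd_succ_genFun, Nat.add_sub_cancel, ← l1Ball_genFun]
  calc _ = 2 * (mk 1 * (1 - X)) * ((1 - X) ^ (m + 1) * mk (fun n => (#(l1Ball m n) : ℤ))) := by
        ring
    _ = _ := by rw [mk_one_mul_one_sub_eq_one, mul_one]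
end
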